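/- If an MV-algebra has exactly one maximal proper implication filter M, then M contains all counits. -/

import Mathlib

/-- An MV-algebra `(α, ⊕, ¬, 0)` with the standard axioms. -/
class MV (α : Type*) extends Add α, Neg α, Zero α where
  add_assoc : ∀ a b c : α, a + (b + c) = (a + b) + c
  add_comm : ∀ a b : α, a + b = b + a
  add_zero : ∀ a : α, a + 0 = a
  neg_neg : ∀ a : α, - -a = a
  add_neg_zero : ∀ a : α, a + -(0 : α) = -(0 : α)
  luk : ∀ a b : α, -(-a + b) + b = -(-b + a) + a

namespace MV

variable {α : Type*} [MV α]

/-- The top element `1 = ¬0`. -/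
def one (α : Type*) [MV α] : α := -(0 : α)

/-- Implication `x → y = ¬x ⊕ y`. -/
def imp (a b : α) : α := -a + b

/-- Strong conjunction `x ⊗ y = ¬(¬x ⊕ ¬y)`. -/
def otimes (a b : α) : α := -(-a + -b)

/-- Join `x ∨ y = (x → y) → y`. -/
def sup (a b : α) : α := imp (imp a b) b

/-- Meet `x ∧ y = ¬(¬x ∨ ¬y)`. -/
def inf (a b : α) : α := -(sup (-a) (-b))

/-- Order: `x ≤ y` iff `x → y = 1`. -/
def le (a b : α) : Prop := imp a b = one α

/-- Strict order. -/
def lt (a b : α) : Prop := le a b ∧ a ≠ b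

/-- `n`-fold `⊗`-power. -/
def pow (a : α) : ℕ → α
  | 0 => one α
  | n + 1 => otimes a (pow a n)

/-- An implication filter: a lattice filter closed under `⊗`. -/
def IsImpFilter (F : Set α) : Prop :=
  one α ∈ F ∧ (∀ x ∈ F, ∀ y : α, le x y → y ∈ F) ∧
    (∀ x ∈ F, ∀ y ∈ F, inf x y ∈ F) ∧ (∀ x ∈ F, ∀ y ∈ F, otimes x y ∈ F)

/-- A prime implication filter: proper and `x ∨ y ∈ F → x ∈ F ∨ y ∈ F`. -/
def IsPrime (F : Set α) : Prop :=
  IsImpFilter F ∧ F ≠ Set.univ ∧ ∀ x y : α, sup x y ∈ F → x ∈ F ∨ y ∈ F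

/-- A minimal prime implication filter. -/
def IsMinimalPrime (F : Set α) : Prop :=
  IsPrime F ∧ ∀ G : Set α, IsPrime G → G ⊆ F → G = F

/-- A maximal proper implication filter. -/
def IsMaximal (F : Set α) : Prop :=
  IsImpFilter F ∧ F ≠ Set.univ ∧
    ∀ G : Set α, IsImpFilter G → G ≠ Set.univ → F ⊆ G → G = F

/-- A counit: `u < 1` joining to `1` with some `v < 1`. -/
def IsCounit (u : α) : Prop :=
  lt u (one α) ∧ ∃ v : α, lt v (one α) ∧ sup u v = one α

/-- The implication filter generated by a set. -/
def gen (S : Set α) : Set α := ⋂₀ {F : Set α | IsImpFilter F ∧ S ⊆ F}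

/-- The Conrad filter: the implication filter generated by all counits. -/
def conrad (α : Type*) [MV α] : Set α := gen {u : α | IsCounit u}

/-- The localizing filter `ℓ(P)`, generated by `{x → p : p ∈ P, x ∉ P}`. -/
def locFilter (P : Set α) : Set α :=
  gen {z : α | ∃ x : α, x ∉ P ∧ ∃ p ∈ P, z = imp x p}

end MV


/-!
For `v < 1`, an element `x` satisfies `x ∨ v = 1` exactly when `¬x ⊕ v = v`. In this form the
set `F_v` of such `x` is visibly closed under `⊗`, since `¬(x ⊗ y) ⊕ v = ¬x ⊕ (¬y ⊕ v)`, and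
upward closed, so it is an implication filter, proper because `0 ∉ F_v`. By Zorn's lemma `F_v`
lies in a maximal proper implication filter, which by uniqueness is `M`; a counit `u` with
`u ∨ v = 1` belongs to `F_v`.
-/

namespace MV

variable {α : Type*} [MV α]

protected lemma zero_add (a : α) : 0 + a = a := by rw [MV.add_comm, MV.add_zero]

protected lemma add_one (a : α) : a + one α = one α := MV.add_neg_zero a

protected lemma one_add (a : α) : one α + a = one α := by rw [MV.add_comm, MV.add_one]

protected lemma neg_one : -(one α) = 0 := MV.neg_neg 0

protected lemma neg_add_cancel (a : α) : -a + a = one α :=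
  calc -a + a = -(-(one α) + a) + a := by rw [MV.neg_one, MV.zero_add]
    _ = -(-a + one α) + one α := MV.luk (one α) a
    _ = one α := MV.add_one _

protected lemma sup_comm (a b : α) : sup a b = sup b a := MV.luk a b

lemma sup_eq_right_of_le {a b : α} (h : le a b) : sup a b = b := by
  change -(-a + b) + b = b
  rw [show -a + b = one α from h, MV.neg_one, MV.zero_add]

lemma le_add_right (a b : α) : le a (a + b) := by
  change -a + (a + b) = one α
  rw [MV.add_assoc, MV.neg_add_cancel, MV.one_add]

lemma le_add_left (a b : α) : le a (b + a) := MV.add_comm a b ▸ le_add_right a b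

lemma zero_le (a : α) : le 0 a := MV.one_add a

protected lemma le_antisymm {a b : α} (hab : le a b) (hba : le b a) : a = b :=
  calc a = sup b a := (sup_eq_right_of_le hba).symm
    _ = sup a b := MV.sup_comm b a
    _ = b := sup_eq_right_of_le hab

lemma exists_add_of_le {a b : α} (h : le a b) : ∃ c, b = a + c :=
  ⟨-(-b + a), calc b = sup b a := by rw [MV.sup_comm, sup_eq_right_of_le h]
    _ = a + -(-b + a) := MV.add_comm _ _⟩

lemma add_le_add_right {a b : α} (h : le a b) (c : α) : le (a + c) (b + c) := by
  obtain ⟨d, rfl⟩ := exists_add_of_le h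
  rw [← MV.add_assoc, MV.add_comm d c, MV.add_assoc]
  exact le_add_right _ _

lemma neg_le_neg {a b : α} (h : le a b) : le (-b) (-a) := by
  change - -b + -a = one α
  rw [MV.neg_neg, MV.add_comm]
  exact h

lemma sup_le_add (a b : α) : le (sup a b) (a + b) := by
  have h : le (-(-a + b)) a := by
    change - -(-a + b) + a = one α
    rw [MV.neg_neg, MV.add_comm (-a) b, ← MV.add_assoc, MV.neg_add_cancel, MV.add_one]
  exact add_le_add_right h b

lemma otimes_le_inf (a b : α) : le (otimes a b) (inf a b) :=
  neg_le_neg (sup_le_add (-a) (-b))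

lemma sup_eq_one_iff {a b : α} : sup a b = one α ↔ -a + b = b := by
  constructor
  · intro h
    exact (MV.le_antisymm (le_add_left b (-a)) (h : le (-a + b) b)).symm
  · intro h
    change -(-a + b) + b = one α
    rw [h, MV.neg_add_cancel]

def supEqOneFilter (v : α) : Set α := {x | sup x v = one α}

lemma mem_supEqOneFilter {v x : α} : x ∈ supEqOneFilter v ↔ -x + v = v := sup_eq_one_iff

lemma isImpFilter_supEqOneFilter (v : α) : IsImpFilter (supEqOneFilter v) := by
  have upward : ∀ x ∈ supEqOneFilter v, ∀ y, le x y → y ∈ supEqOneFilter v := by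
    intro x hx y hxy
    rw [mem_supEqOneFilter] at hx ⊢
    have h : le (-y + v) (-x + v) := add_le_add_right (neg_le_neg hxy) v
    rw [hx] at h
    exact MV.le_antisymm h (le_add_left v (-y))
  have otimes_mem : ∀ x ∈ supEqOneFilter v, ∀ y ∈ supEqOneFilter v,
      otimes x y ∈ supEqOneFilter v := by
    intro x hx y hy
    rw [mem_supEqOneFilter] at hx hy ⊢
    rw [otimes, MV.neg_neg, ← MV.add_assoc, hy, hx]
  refine ⟨?_, upward, fun x hx y hy ↦ upward _ (otimes_mem x hx y hy) _ (otimes_le_inf x y),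
    otimes_mem⟩
  rw [mem_supEqOneFilter, MV.neg_one, MV.zero_add]

lemma zero_not_mem_supEqOneFilter {v : α} (hv : v ≠ one α) : (0 : α) ∉ supEqOneFilter v := by
  rw [mem_supEqOneFilter, ← MV.neg_one, MV.neg_neg, MV.one_add]
  exact Ne.symm hv

lemma IsImpFilter.eq_univ_iff_zero_mem {F : Set α} (hF : IsImpFilter F) :
    F = Set.univ ↔ (0 : α) ∈ F :=
  ⟨fun h ↦ h ▸ Set.mem_univ 0,
    fun h ↦ Set.eq_univ_of_forall fun y ↦ hF.2.1 0 h y (zero_le y)⟩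

lemma isImpFilter_sUnion {C : Set (Set α)} (hC : ∀ F ∈ C, IsImpFilter F)
    (hchain : IsChain (· ⊆ ·) C) (hne : C.Nonempty) : IsImpFilter (⋃₀ C) := by
  have closed : ∀ op : α → α → α, (∀ F ∈ C, ∀ x ∈ F, ∀ y ∈ F, op x y ∈ F) →
      ∀ x ∈ ⋃₀ C, ∀ y ∈ ⋃₀ C, op x y ∈ ⋃₀ C := by
    rintro op hop x ⟨F, hF, hx⟩ y ⟨G, hG, hy⟩
    rcases hchain.total hF hG with h | h
    · exact ⟨G, hG, hop G hG x (h hx) y hy⟩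
    · exact ⟨F, hF, hop F hF x hx y (h hy)⟩
  obtain ⟨F₀, hF₀⟩ := hne
  refine ⟨⟨F₀, hF₀, (hC F₀ hF₀).1⟩, ?_, closed inf fun F hF ↦ (hC F hF).2.2.1,
    closed otimes fun F hF ↦ (hC F hF).2.2.2⟩
  rintro x ⟨F, hF, hx⟩ y hxy
  exact ⟨F, hF, (hC F hF).2.1 x hx y hxy⟩

lemma exists_isMaximal_superset {F : Set α} (hF : IsImpFilter F) (h0 : (0 : α) ∉ F) :
    ∃ M, F ⊆ M ∧ IsMaximal M := by
  let S : Set (Set α) := {G | IsImpFilter G ∧ (0 : α) ∉ G}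
  have chain_bound : ∀ C ⊆ S, IsChain (· ⊆ ·) C → C.Nonempty → ∃ ub ∈ S, ∀ G ∈ C, G ⊆ ub :=
    fun C hCS hchain hne ↦ ⟨⋃₀ C,
      ⟨isImpFilter_sUnion (fun G hG ↦ (hCS hG).1) hchain hne,
        fun ⟨G, hG, h0G⟩ ↦ (hCS hG).2 h0G⟩,
      fun _ ↦ Set.subset_sUnion_of_mem⟩
  obtain ⟨M, hFM, ⟨hM, h0M⟩, hmax⟩ := zorn_subset_nonempty S chain_bound F ⟨hF, h0⟩
  refine ⟨M, hFM, hM, mt hM.eq_univ_iff_zero_mem.mp h0M, fun G hG hGne hMG ↦ ?_⟩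
  exact (hmax ⟨hG, mt hG.eq_univ_iff_zero_mem.mpr hGne⟩ hMG).antisymm hMG

end MV

open MV
theorem unique_maximal_contains_counits_general {α : Type*} [MV α] (M : Set α)
    (huniq : ∀ M' : Set α, IsMaximal M' → M' = M) :
    ∀ u : α, IsCounit u → u ∈ M := by
  rintro u ⟨-, v, hv, huv⟩
  obtain ⟨M', hvM', hM'⟩ :=
    exists_isMaximal_superset (isImpFilter_supEqOneFilter v) (zero_not_mem_supEqOneFilter hv.2)
  exact huniq M' hM' ▸ hvM' huv

/-- A unique maximal proper implication filter contains all counits. -/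
theorem unique_maximal_contains_counits {α : Type*} [MV α] (M : Set α)
    (hM : IsMaximal M) (huniq : ∀ M' : Set α, IsMaximal M' → M' = M) :
    ∀ u : α, IsCounit u → u ∈ M :=
  unique_maximal_contains_counits_general M huniq
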